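/- Let M be a nonnegative integer. Then the sum over all monic polynomials r ∈ 𝔽_q[t] with deg(r) ≤ M of (−1)^{deg(r)} · φ(r)/q^{2·deg(r)} equals 1 if M is even and equals 1/q if M is odd. -/

import Mathlib

/-!
A pair `(r, b)` with `r` monic of degree `n` and `deg b < n` factors uniquely as `(g r', g b')`
with `g = gcd(r, b)` monic and `b'` coprime to `r'`, i.e. `b'` a unit modulo `r'`. Writing
`Φ(m) = ∑_{r monic, deg r = m} φ(r)` and counting the `q^{2n}` pairs by `deg g` gives
`∑_{k + m = n} q^k Φ(m) = q^{2n}`, hence `Φ(0) = 1` and `Φ(n + 1) = q^{2n+2} - q^{2n+1}`.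
So every term of degree `n ≥ 1` of the alternating sum equals `(-1)^n (1 - 1/q)`, and the partial
sums alternate between `1` and `1/q`.
-/

open Polynomial

/-- Euler's totient function on `𝔽_q[t]`: the number of units of `𝔽_q[t]/(r)`. -/
noncomputable def polyPhi {Fq : Type} [Field Fq] (r : Polynomial Fq) : ℕ :=
  Nat.card (Polynomial Fq ⧸ Ideal.span {r})ˣ

open Finset

theorem Ideal.Quotient.isUnit_mk_span_singleton_iff {R : Type*} [CommRing R] {r b : R} :
    IsUnit (Ideal.Quotient.mk (Ideal.span {r}) b) ↔ IsCoprime b r := by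
  simp only [isUnit_iff_exists_inv, IsCoprime]
  constructor
  · rintro ⟨c, hc⟩
    obtain ⟨u, rfl⟩ := Ideal.Quotient.mk_surjective c
    rw [← map_mul, ← map_one (Ideal.Quotient.mk _), Ideal.Quotient.eq,
      Ideal.mem_span_singleton'] at hc
    obtain ⟨v, hv⟩ := hc
    exact ⟨u, -v, by linear_combination -hv⟩
  · rintro ⟨u, v, h⟩
    refine ⟨Ideal.Quotient.mk _ u, ?_⟩
    rw [← map_mul, ← map_one (Ideal.Quotient.mk _), Ideal.Quotient.eq,
      Ideal.mem_span_singleton']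
    exact ⟨-v, by linear_combination -h⟩

theorem IsCoprime.dvd_of_dvd_mul_of_dvd_mul {R : Type*} [CommSemiring R] {r b d g : R}
    (h : IsCoprime r b) (hr : d ∣ g * r) (hb : d ∣ g * b) : d ∣ g := by
  obtain ⟨u, v, huv⟩ := h
  calc d ∣ u * (g * r) + v * (g * b) :=
        dvd_add (dvd_mul_of_dvd_right hr u) (dvd_mul_of_dvd_right hb v)
    _ = g * (u * r + v * b) := by ring
    _ = g := by rw [huv, mul_one]

namespace Polynomial

theorem mul_mem_degreeLT {R : Type*} [Semiring R] {g b : R[X]} {k m : ℕ}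
    (hg : g.natDegree ≤ k) (hb : b ∈ degreeLT R m) : g * b ∈ degreeLT R (k + m) := by
  rcases eq_or_ne b 0 with rfl | hb0
  · simp
  rw [mem_degreeLT, degree_eq_natDegree hb0, Nat.cast_lt] at hb
  rw [mem_degreeLT]
  calc (g * b).degree ≤ g.degree + b.degree := degree_mul_le _ _
    _ ≤ k + b.natDegree := add_le_add (degree_le_of_natDegree_le hg) degree_le_natDegree
    _ < ↑(k + m) := by norm_cast; omega

theorem Monic.mem_degreeLT_of_mul_mem {R : Type*} [Semiring R] {g b : R[X]} {m : ℕ}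
    (hg : g.Monic) (h : g * b ∈ degreeLT R (g.natDegree + m)) : b ∈ degreeLT R m := by
  nontriviality R
  rw [mem_degreeLT, hg.degree_mul_comm, hg.degree_mul, degree_eq_natDegree hg.ne_zero,
    Nat.cast_add, add_comm b.degree] at h
  exact mem_degreeLT.mpr ((WithBot.add_lt_add_iff_left WithBot.coe_ne_bot).mp h)

theorem exists_monic_mul_isCoprime {K : Type*} [Field K] {r : K[X]} (hr : r.Monic) (b : K[X]) :
    ∃ g r' b', g.Monic ∧ r = g * r' ∧ b = g * b' ∧ IsCoprime r' b' := by
  classical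
  obtain ⟨r', b', hr', hb', hunit⟩ := extract_gcd r b
  refine ⟨gcd r b, r', b', ?_, hr', hb', (gcd_isUnit_iff _ _).mp hunit⟩
  rw [← _root_.normalize_gcd]
  exact monic_normalize (gcd_ne_zero_of_left hr.ne_zero)

noncomputable def degreeLTEquivQuotientSpan {R : Type*} [CommRing R] [Nontrivial R]
    {r : R[X]} (hr : r.Monic) : degreeLT R r.natDegree ≃ R[X] ⧸ Ideal.span {r} :=
  Equiv.ofBijective (fun b => Ideal.Quotient.mk _ b) <| by
    have hdeg : r.degree = r.natDegree := degree_eq_natDegree hr.ne_zero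
    refine ⟨fun b₁ b₂ h => Subtype.ext <| sub_eq_zero.mp ?_, fun x => ?_⟩
    · rw [Ideal.Quotient.eq, Ideal.mem_span_singleton] at h
      by_contra hne
      refine hr.not_dvd_of_degree_lt hne ?_ h
      rw [hdeg]
      exact (degree_sub_le _ _).trans_lt (max_lt (mem_degreeLT.mp b₁.2) (mem_degreeLT.mp b₂.2))
    · obtain ⟨c, rfl⟩ := Ideal.Quotient.mk_surjective x
      refine ⟨⟨c %ₘ r, mem_degreeLT.mpr (hdeg ▸ degree_modByMonic_lt c hr)⟩, ?_⟩
      rw [Ideal.Quotient.eq, Ideal.mem_span_singleton]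
      exact ⟨-(c /ₘ r), by
        show c %ₘ r - c = _
        linear_combination modByMonic_add_div c r⟩

instance finite_degreeLT {R : Type*} [Semiring R] [Finite R] (n : ℕ) : Finite (degreeLT R n) :=
  Module.finite_of_finite R

theorem card_degreeLT {R : Type*} [Semiring R] (n : ℕ) :
    Nat.card (degreeLT R n) = Nat.card R ^ n := by
  rw [Nat.card_congr (degreeLTEquiv R n).toEquiv, Nat.card_fun, Nat.card_fin]

def monicOfDegree (R : Type*) [Semiring R] (n : ℕ) : Set R[X] :=
  {p | p.Monic ∧ p.natDegree = n}

instance finite_monicOfDegree {R : Type*} [Semiring R] [Nontrivial R] [Finite R] (n : ℕ) :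
    Finite (monicOfDegree R n) :=
  .of_equiv _ (monicEquivDegreeLT n).symm

theorem card_monicOfDegree {R : Type*} [Semiring R] [Nontrivial R] (n : ℕ) :
    Nat.card (monicOfDegree R n) = Nat.card R ^ n :=
  (Nat.card_congr (monicEquivDegreeLT n)).trans (card_degreeLT n)

end Polynomial

theorem polyPhi_eq_card_isCoprime {K : Type} [Field K] {r : K[X]} (hr : r.Monic) {n : ℕ}
    (hn : r.natDegree = n) :
    polyPhi r = Nat.card {b : degreeLT K n // IsCoprime (b : K[X]) r} := by
  subst hn
  rw [polyPhi, Nat.card_congr (Equiv.ofInjective _ Units.val_injective)]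
  exact Nat.card_congr (Equiv.subtypeEquiv (degreeLTEquivQuotientSpan hr)
    fun b => Ideal.Quotient.isUnit_mk_span_singleton_iff.symm).symm

abbrev CoprimePairs (R : Type*) [CommRing R] (n : ℕ) : Type _ :=
  Σ r : monicOfDegree R n, {b : degreeLT R n // IsCoprime (b : R[X]) r.1}

section CoprimePairs

variable {K : Type} [Field K]

theorem finsum_polyPhi_monicOfDegree [Finite K] (n : ℕ) :
    ∑ᶠ r ∈ monicOfDegree K n, polyPhi r = Nat.card (CoprimePairs K n) := by
  have := Fintype.ofFinite (monicOfDegree K n)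
  rw [← finsum_set_coe_eq_finsum_mem, finsum_eq_sum_of_fintype, Nat.card_sigma]
  exact Finset.sum_congr rfl fun r _ => polyPhi_eq_card_isCoprime r.2.1 r.2.2

noncomputable def mulCoprimePair (n : ℕ) :
    (Σ p : antidiagonal n, monicOfDegree K p.1.1 × CoprimePairs K p.1.2) →
      monicOfDegree K n × degreeLT K n
  | ⟨⟨(k, m), hkm⟩, ⟨g, hg, hgk⟩, ⟨r, hr, hrm⟩, ⟨b, hb⟩, _⟩ =>
    have hkm : k + m = n := mem_antidiagonal.mp hkm
    (⟨g * r, hg.mul hr, by rw [hg.natDegree_mul hr, hgk, hrm, hkm]⟩,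
      ⟨g * b, degreeLT_mono hkm.le (mul_mem_degreeLT hgk.le hb)⟩)

theorem mulCoprimePair_injective (n : ℕ) : Function.Injective (mulCoprimePair (K := K) n) := by
  rintro ⟨⟨⟨k₁, m₁⟩, h₁⟩, ⟨g₁, hg₁, hk₁⟩, ⟨r₁, hr₁, hm₁⟩, ⟨b₁, hb₁⟩, hcop₁⟩
    ⟨⟨⟨k₂, m₂⟩, h₂⟩, ⟨g₂, hg₂, hk₂⟩, ⟨r₂, hr₂, hm₂⟩, ⟨b₂, hb₂⟩, hcop₂⟩ h
  simp only [mulCoprimePair, Prod.mk.injEq, Subtype.ext_iff] at h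
  obtain ⟨hr, hb⟩ := h
  obtain rfl : g₁ = g₂ := eq_of_monic_of_associated hg₁ hg₂ <| associated_of_dvd_dvd
    (hcop₂.symm.dvd_of_dvd_mul_of_dvd_mul (hr ▸ dvd_mul_right _ _) (hb ▸ dvd_mul_right _ _))
    (hcop₁.symm.dvd_of_dvd_mul_of_dvd_mul (hr ▸ dvd_mul_right _ _) (hb ▸ dvd_mul_right _ _))
  obtain rfl := mul_left_cancel₀ hg₁.ne_zero hr
  obtain rfl := mul_left_cancel₀ hg₁.ne_zero hb
  obtain rfl : k₁ = k₂ := hk₁.symm.trans hk₂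
  obtain rfl : m₁ = m₂ := hm₁.symm.trans hm₂
  rfl

theorem mulCoprimePair_surjective (n : ℕ) : Function.Surjective (mulCoprimePair (K := K) n) := by
  rintro ⟨⟨r, hr, hrn⟩, b, hb⟩
  obtain ⟨g, r', b', hg, rfl, rfl, hcop⟩ := exists_monic_mul_isCoprime hr b
  have hr' : r'.Monic := hg.of_mul_monic_left hr
  have hkm : g.natDegree + r'.natDegree = n := by rw [← hg.natDegree_mul hr', hrn]
  exact ⟨⟨⟨(g.natDegree, r'.natDegree), mem_antidiagonal.mpr hkm⟩, ⟨g, hg, rfl⟩, ⟨r', hr', rfl⟩,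
    ⟨b', hg.mem_degreeLT_of_mul_mem (hkm ▸ hb)⟩, hcop.symm⟩, rfl⟩

variable [Finite K]

theorem sum_antidiagonal_card_coprimePairs (n : ℕ) :
    ∑ p ∈ antidiagonal n, Nat.card K ^ p.1 * Nat.card (CoprimePairs K p.2) =
      Nat.card K ^ (2 * n) := by
  have hpairs : Nat.card (monicOfDegree K n × degreeLT K n) = Nat.card K ^ (2 * n) := by
    rw [Nat.card_prod, card_monicOfDegree, card_degreeLT, ← pow_add, two_mul]
  rw [← hpairs, ← Nat.card_congr (Equiv.ofBijective _
    ⟨mulCoprimePair_injective n, mulCoprimePair_surjective n⟩), Nat.card_sigma,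
    ← Finset.sum_coe_sort]
  simp only [Nat.card_prod, card_monicOfDegree]

theorem card_coprimePairs_zero : Nat.card (CoprimePairs K 0) = 1 := by
  simpa using sum_antidiagonal_card_coprimePairs (K := K) 0

theorem card_coprimePairs_succ (n : ℕ) :
    Nat.card (CoprimePairs K (n + 1)) + Nat.card K ^ (2 * n + 1) = Nat.card K ^ (2 * n + 2) := by
  have hshift : ∑ p ∈ antidiagonal n, Nat.card K ^ (p.1 + 1) * Nat.card (CoprimePairs K p.2) =
      Nat.card K ^ (2 * n + 1) := by
    rw [pow_succ, ← sum_antidiagonal_card_coprimePairs, Finset.sum_mul]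
    exact Finset.sum_congr rfl fun p _ => by ring
  have h := sum_antidiagonal_card_coprimePairs (K := K) (n + 1)
  rwa [Nat.sum_antidiagonal_succ, hshift, pow_zero, one_mul] at h

end CoprimePairs

theorem sum_range_neg_one_pow_mul_div_pow {F : Type*} [Field F] {q : F} (hq : q ≠ 0)
    {c : ℕ → F} (h0 : c 0 = 1) (hsucc : ∀ n, c (n + 1) + q ^ (2 * n + 1) = q ^ (2 * n + 2))
    (M : ℕ) :
    ∑ n ∈ range (M + 1), (-1) ^ n * c n / q ^ (2 * n) = if Even M then 1 else 1 / q := by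
  induction M with
  | zero => simp [h0]
  | succ M ih =>
    have hterm : (-1) ^ (M + 1) * c (M + 1) / q ^ (2 * (M + 1)) =
        (-1) ^ (M + 1) * (1 - 1 / q) := by
      rw [eq_sub_of_add_eq (hsucc M)]
      field_simp
      ring
    rw [Finset.sum_range_succ, ih, hterm]
    rcases Nat.even_or_odd M with hM | hM
    · rw [if_pos hM, if_neg (Nat.not_even_iff_odd.mpr hM.add_one), hM.add_one.neg_one_pow]
      ring
    · rw [if_neg (Nat.not_even_iff_odd.mpr hM), if_pos hM.add_one, hM.add_one.neg_one_pow]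
      ring

/-- For `M ≥ 0`, the sum over monic `r` with `deg r ≤ M` of
`(-1)^{deg r}·φ(r)/q^{2·deg r}` equals `1` if `M` is even and `1/q` if `M` is odd. -/
theorem phi_alt_sum_c_two (Fq : Type) [Field Fq] [Fintype Fq] (M : ℕ) :
    ∑ᶠ r ∈ {r : Polynomial Fq | r.Monic ∧ r.natDegree ≤ M},
        (-1 : ℚ) ^ r.natDegree * (polyPhi r : ℚ) / (Fintype.card Fq : ℚ) ^ (2 * r.natDegree) =
      if Even M then 1 else 1 / (Fintype.card Fq : ℚ) := by
  rw [← Nat.card_eq_fintype_card]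
  set q : ℚ := (Nat.card Fq : ℚ)
  have hdecomp : {r : Fq[X] | r.Monic ∧ r.natDegree ≤ M} =
      ⋃ n ∈ (range (M + 1) : Set ℕ), monicOfDegree Fq n := by
    ext r
    simp [monicOfDegree]
  have hdisj : (range (M + 1) : Set ℕ).PairwiseDisjoint (monicOfDegree Fq) :=
    fun i _ j _ hij => Set.disjoint_left.mpr fun r hi hj => hij (hi.2.symm.trans hj.2)
  have hfiber (n : ℕ) : ∑ᶠ r ∈ monicOfDegree Fq n,
      (-1 : ℚ) ^ r.natDegree * (polyPhi r : ℚ) / q ^ (2 * r.natDegree) =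
        (-1) ^ n * Nat.card (CoprimePairs Fq n) / q ^ (2 * n) := by
    rw [← finsum_polyPhi_monicOfDegree, Nat.cast_finsum_mem (Set.toFinite _),
      mul_div_right_comm, mul_finsum_mem]
    exact finsum_mem_congr rfl fun r hr => by rw [hr.2]; ring
  rw [hdecomp, finsum_mem_biUnion hdisj (Set.toFinite _) (fun n _ => Set.toFinite _),
    finsum_mem_coe_finset, Finset.sum_congr rfl fun n _ => hfiber n]
  have hq : q ≠ 0 := Nat.cast_ne_zero.mpr Nat.card_pos.ne'
  exact sum_range_neg_one_pow_mul_div_pow hq (by simp [card_coprimePairs_zero])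
    (fun n => by simp only [q]; exact_mod_cast card_coprimePairs_succ n) M
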